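/- For each k ≥ 1, if (x,y,z) ∈ ℝ³ satisfies x² + y² + z² − 2xyz = 1 + λ²/4 with λ > 0, then the first two coordinates of T_k(x,y,z) = (x U_k(y) − z U_{k-1}(y), x U_{k-1}(y) − z U_{k-2}(y), y) satisfy: (x U_k(y) − z U_{k-1}(y))² + y² + (x U_{k-1}(y) − z U_{k-2}(y))² − 2y(x U_k(y) − z U_{k-1}(y))(x U_{k-1}(y) − z U_{k-2}(y)) = x² + y² + z² − 2xyz. That is, the Fricke–Vogt invariant I(x,y,z) = x² + y² + z² − 2xyz is preserved (exactly, as a polynomial identity) by T_k. -/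

import Mathlib

/-!
The quadratic form `q(u, v) = u² + v² - 2yuv` is invariant under the step `(u, v) ↦ (2yu - v, u)`
of the Chebyshev recurrence. The pair of coordinates of `T_k(x, y, z)` is obtained from
`(2xy - z, x)` by `k - 1` such steps, and `q(2xy - z, x) = x² + z² - 2xyz`.
-/

/-- Shifted Chebyshev polynomials of the second kind: `cheb (k+1) = U_k`. -/
def cheb : ℕ → ℝ → ℝ
  | 0, _ => 0
  | 1, _ => 1
  | n + 2, y => 2 * y * cheb (n + 1) y - cheb n y

theorem sq_add_sq_sub_mul_eq_of_recurrence {R : Type*} [CommRing R] (y : R) (f : ℕ → R)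
    (hf : ∀ n, f (n + 2) = 2 * y * f (n + 1) - f n) (n : ℕ) :
    f (n + 1) ^ 2 + f n ^ 2 - 2 * y * f (n + 1) * f n
      = f 1 ^ 2 + f 0 ^ 2 - 2 * y * f 1 * f 0 := by
  induction n with
  | zero => rfl
  | succ n ih =>
    rw [hf]
    linear_combination ih

theorem cheb_add_two (n : ℕ) (y : ℝ) : cheb (n + 2) y = 2 * y * cheb (n + 1) y - cheb n y := rfl

theorem cheb_combination_recurrence (x y z : ℝ) (n : ℕ) :
    x * cheb (n + 3) y - z * cheb (n + 2) y
      = 2 * y * (x * cheb (n + 2) y - z * cheb (n + 1) y) - (x * cheb (n + 1) y - z * cheb n y) := by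
  rw [cheb_add_two (n + 1), cheb_add_two n]
  ring

theorem stmt19 (k : ℕ) (hk : 1 ≤ k) (x y z : ℝ) :
    (x * cheb (k + 1) y - z * cheb k y) ^ 2 + y ^ 2
      + (x * cheb k y - z * cheb (k - 1) y) ^ 2
      - 2 * y * (x * cheb (k + 1) y - z * cheb k y)
          * (x * cheb k y - z * cheb (k - 1) y)
      = x ^ 2 + y ^ 2 + z ^ 2 - 2 * x * y * z := by
  obtain ⟨m, rfl⟩ := Nat.exists_eq_add_of_le' hk
  have hinv := sq_add_sq_sub_mul_eq_of_recurrence y (fun n ↦ x * cheb (n + 1) y - z * cheb n y)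
    (cheb_combination_recurrence x y z) m
  have hcheb : cheb 2 y = 2 * y ∧ cheb 1 y = 1 ∧ cheb 0 y = 0 := by simp [cheb]
  simp only [Nat.add_sub_cancel, zero_add, Nat.reduceAdd, hcheb] at hinv ⊢
  linear_combination hinv
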